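/- For every U ∈ ℕ₊: (i) R_U(i/2^U) = (i/2^U)² for every integer 0 ≤ i ≤ 2^U; (ii) on each interval [i/2^U, (i+1)/2^U] (0 ≤ i ≤ 2^U−1) the function R_U is affine, namely R_U(x) = ((2i+1)/2^U)(x − i/2^U) + (i/2^U)²; and (iii) 0 ≤ R_U(x) − x² ≤ 2^{−2U−2} for all x ∈ [0,1]. -/
import Mathlib


noncomputable section

open Finset

/-- The sawtooth function `T₁`. -/
def T1 (x : ℝ) : ℝ := if x ≤ 1 / 2 then 2 * x else 2 * (1 - x)

/-- `R_U(x) = x - ∑_{i=1}^U T_i(x)/4^i`, where `T_i = T₁∘⋯∘T₁` (`i` times). -/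
def RU (U : ℕ) (x : ℝ) : ℝ := x - ∑ i ∈ Finset.Icc 1 U, T1^[i] x / 4 ^ i

lemma T1_iter : ∀ U : ℕ, ∀ i : ℕ, i ≤ 2 ^ U - 1 → ∀ x : ℝ,
    (i : ℝ) / 2 ^ U ≤ x → x ≤ ((i : ℝ) + 1) / 2 ^ U →
    T1^[U] x = if Even i then 2 ^ U * x - i else (i + 1) - 2 ^ U * x := by
  intro U
  induction U with
  | zero =>
    intro i hi x h1 h2
    interval_cases i
    simp
  | succ U ih =>
    intro i hi x h1 h2
    have hP : (0:ℝ) < 2 ^ (U+1) := by positivity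
    have hQ : (0:ℝ) < 2 ^ U := by positivity
    have h2p : (2:ℝ) ^ (U+1) = 2 * 2 ^ U := by rw [pow_succ]; ring
    have hb1 : (i : ℝ) ≤ 2 ^ (U+1) * x := by
      rw [div_le_iff₀ hP] at h1; linarith
    have hb2 : 2 ^ (U+1) * x ≤ (i : ℝ) + 1 := by
      rw [le_div_iff₀ hP] at h2; linarith
    have hnp : 2 ^ (U+1) = 2 * 2 ^ U := by rw [pow_succ]; ring
    have h1n : 1 ≤ 2 ^ U := Nat.one_le_two_pow
    rw [h2p] at hb1 hb2
    rcases Nat.even_or_odd i with ⟨j, hj⟩ | ⟨j, hj⟩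
    · -- i = 2j
      have hieven : Even i := ⟨j, hj⟩
      have hj' : j ≤ 2 ^ U - 1 := by omega
      have hjr : (i:ℝ) = 2 * j := by rw [hj]; push_cast; ring
      rw [hjr] at hb1 hb2
      have hx1 : (j:ℝ) / 2 ^ U ≤ x := by rw [div_le_iff₀ hQ]; linarith
      have hx2 : x ≤ ((j:ℝ) + 1) / 2 ^ U := by rw [le_div_iff₀ hQ]; linarith
      have hIH := ih j hj' x hx1 hx2
      rw [Function.iterate_succ_apply', hIH, if_pos hieven, hjr, h2p]
      rcases Nat.even_or_odd j with hj2 | hj2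
      · rw [if_pos hj2]
        unfold T1
        split_ifs with h
        · linarith
        · linarith
      · rw [if_neg (Nat.not_even_iff_odd.mpr hj2)]
        unfold T1
        split_ifs with h
        · linarith
        · linarith
    · -- i = 2j+1
      have hiodd : ¬ Even i := Nat.not_even_iff_odd.mpr ⟨j, hj⟩
      have hj' : j ≤ 2 ^ U - 1 := by omega
      have hjr : (i:ℝ) = 2 * j + 1 := by rw [hj]; push_cast; ring
      rw [hjr] at hb1 hb2
      have hx1 : (j:ℝ) / 2 ^ U ≤ x := by rw [div_le_iff₀ hQ]; linarith
      have hx2 : x ≤ ((j:ℝ) + 1) / 2 ^ U := by rw [le_div_iff₀ hQ]; linarith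
      have hIH := ih j hj' x hx1 hx2
      rw [Function.iterate_succ_apply', hIH, if_neg hiodd, hjr, h2p]
      rcases Nat.even_or_odd j with hj2 | hj2
      · rw [if_pos hj2]
        unfold T1
        split_ifs with h
        · linarith
        · linarith
      · rw [if_neg (Nat.not_even_iff_odd.mpr hj2)]
        unfold T1
        split_ifs with h
        · linarith
        · linarith

lemma RU_succ (U : ℕ) (x : ℝ) :
    RU (U+1) x = RU U x - T1^[U+1] x / 4 ^ (U+1) := by
  unfold RU
  rw [Finset.sum_Icc_succ_top (by omega : 1 ≤ U+1)]
  ring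

lemma RU_affine : ∀ U : ℕ, ∀ i : ℕ, i ≤ 2 ^ U - 1 → ∀ x : ℝ,
    (i : ℝ) / 2 ^ U ≤ x → x ≤ ((i : ℝ) + 1) / 2 ^ U →
    RU U x = (2 * (i : ℝ) + 1) / 2 ^ U * (x - (i : ℝ) / 2 ^ U) + ((i : ℝ) / 2 ^ U) ^ 2 := by
  intro U
  induction U with
  | zero =>
    intro i hi x h1 h2
    interval_cases i
    simp [RU]
  | succ U ih =>
    intro i hi x h1 h2
    have hP : (0:ℝ) < 2 ^ (U+1) := by positivity
    have hQ : (0:ℝ) < 2 ^ U := by positivity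
    have hQ' : (2:ℝ) ^ U ≠ 0 := ne_of_gt hQ
    have h2p : (2:ℝ) ^ (U+1) = 2 * 2 ^ U := by rw [pow_succ]; ring
    have h4p : (4:ℝ) ^ (U+1) = (2 * 2 ^ U)^2 := by
      rw [← h2p, sq, ← mul_pow]; norm_num
    have hb1 : (i : ℝ) ≤ 2 ^ (U+1) * x := by
      rw [div_le_iff₀ hP] at h1; linarith
    have hb2 : 2 ^ (U+1) * x ≤ (i : ℝ) + 1 := by
      rw [le_div_iff₀ hP] at h2; linarith
    have hnp : 2 ^ (U+1) = 2 * 2 ^ U := by rw [pow_succ]; ring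
    have h1n : 1 ≤ 2 ^ U := Nat.one_le_two_pow
    have hT := T1_iter (U+1) i hi x h1 h2
    rw [h2p] at hb1 hb2 hT
    rw [RU_succ, hT, h4p, h2p]
    rcases Nat.even_or_odd i with ⟨j, hj⟩ | ⟨j, hj⟩
    · have hieven : Even i := ⟨j, hj⟩
      have hj' : j ≤ 2 ^ U - 1 := by omega
      have hjr : (i:ℝ) = 2 * j := by rw [hj]; push_cast; ring
      rw [hjr] at hb1 hb2 ⊢
      rw [if_pos hieven]
      have hx1 : (j:ℝ) / 2 ^ U ≤ x := by rw [div_le_iff₀ hQ]; linarith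
      have hx2 : x ≤ ((j:ℝ) + 1) / 2 ^ U := by rw [le_div_iff₀ hQ]; linarith
      rw [ih j hj' x hx1 hx2]
      field_simp
      ring
    · have hiodd : ¬ Even i := Nat.not_even_iff_odd.mpr ⟨j, hj⟩
      have hj' : j ≤ 2 ^ U - 1 := by omega
      have hjr : (i:ℝ) = 2 * j + 1 := by rw [hj]; push_cast; ring
      rw [hjr] at hb1 hb2 ⊢
      rw [if_neg hiodd]
      have hx1 : (j:ℝ) / 2 ^ U ≤ x := by rw [div_le_iff₀ hQ]; linarith
      have hx2 : x ≤ ((j:ℝ) + 1) / 2 ^ U := by rw [le_div_iff₀ hQ]; linarith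
      rw [ih j hj' x hx1 hx2]
      field_simp
      ring

theorem stmt7 (U : ℕ) (hU : 0 < U) :
    (∀ i : ℕ, i ≤ 2 ^ U → RU U ((i : ℝ) / 2 ^ U) = ((i : ℝ) / 2 ^ U) ^ 2) ∧
    (∀ i : ℕ, i ≤ 2 ^ U - 1 → ∀ x ∈ Set.Icc ((i : ℝ) / 2 ^ U) (((i : ℝ) + 1) / 2 ^ U),
      RU U x = (2 * (i : ℝ) + 1) / 2 ^ U * (x - (i : ℝ) / 2 ^ U) + ((i : ℝ) / 2 ^ U) ^ 2) ∧
    (∀ x ∈ Set.Icc (0 : ℝ) 1,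
      0 ≤ RU U x - x ^ 2 ∧ RU U x - x ^ 2 ≤ 1 / 2 ^ (2 * U + 2)) := by
  have hQ : (0:ℝ) < 2 ^ U := by positivity
  have hQ' : (2:ℝ) ^ U ≠ 0 := ne_of_gt hQ
  have h1n : 1 ≤ 2 ^ U := Nat.one_le_two_pow
  refine ⟨?_, ?_, ?_⟩
  · intro i hi
    rcases eq_or_lt_of_le hi with he | hlt
    · have hic : (i:ℝ) = 2 ^ U := by rw [he]; push_cast; ring
      have hm1 : ((2 ^ U - 1 : ℕ) : ℝ) = 2 ^ U - 1 := by
        push_cast [Nat.cast_sub h1n]; ring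
      have := RU_affine U (2 ^ U - 1) le_rfl ((i:ℝ) / 2 ^ U)
        (by rw [hm1, hic, div_le_div_iff_of_pos_right hQ]; linarith)
        (by rw [hm1, hic]; gcongr <;> linarith)
      rw [this, hm1, hic]
      field_simp
      ring
    · have hi' : i ≤ 2 ^ U - 1 := by omega
      rw [RU_affine U i hi' ((i:ℝ)/2^U) le_rfl
        (by gcongr <;> linarith)]
      ring
  · intro i hi x hx
    exact RU_affine U i hi x hx.1 hx.2
  · intro x hx
    set i := min ⌊2 ^ U * x⌋₊ (2 ^ U - 1) with hidef
    have hi : i ≤ 2 ^ U - 1 := min_le_right _ _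
    have hfl : (i : ℝ) ≤ 2 ^ U * x := by
      calc (i:ℝ) ≤ ((⌊2 ^ U * x⌋₊ : ℕ) : ℝ) := Nat.cast_le.mpr (min_le_left _ _)
        _ ≤ 2 ^ U * x := Nat.floor_le (mul_nonneg (by positivity) hx.1)
    have h1 : (i:ℝ) / 2 ^ U ≤ x := by rw [div_le_iff₀ hQ]; linarith
    have hfr : 2 ^ U * x ≤ (i : ℝ) + 1 := by
      rcases le_or_gt (2 ^ U - 1) ⌊2 ^ U * x⌋₊ with h | h
      · have : i = 2 ^ U - 1 := min_eq_right h
        have : (i:ℝ) + 1 = 2 ^ U := by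
          rw [this]; push_cast [Nat.cast_sub h1n]; ring
        rw [this]; nlinarith [hx.2]
      · have : i = ⌊2 ^ U * x⌋₊ := min_eq_left h.le
        have := Nat.lt_floor_add_one (2 ^ U * x)
        rw [← ‹i = ⌊2 ^ U * x⌋₊›] at this
        · push_cast at this ⊢; linarith
    have h2 : x ≤ ((i:ℝ) + 1) / 2 ^ U := by rw [le_div_iff₀ hQ]; linarith
    rw [RU_affine U i hi x h1 h2]
    have key : (2 * (i : ℝ) + 1) / 2 ^ U * (x - (i : ℝ) / 2 ^ U) + ((i : ℝ) / 2 ^ U) ^ 2 - x ^ 2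
        = (2 ^ U * x - i) * ((i:ℝ) + 1 - 2 ^ U * x) / (2 ^ U) ^ 2 := by
      field_simp
      ring
    rw [key]
    constructor
    · apply div_nonneg _ (by positivity)
      nlinarith
    · have hp : (2:ℝ) ^ (2 * U + 2) = 4 * (2 ^ U) ^ 2 := by
        have h22 : ((2:ℝ)^U)^2 = 2^(2*U) := by rw [← pow_mul, mul_comm]
        rw [pow_add, ← h22]; norm_num; ring
      rw [hp, div_le_div_iff₀ (by positivity) (by positivity)]
      nlinarith [sq_nonneg (2 * (2 ^ U * x) - 2 * (i:ℝ) - 1)]
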